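/- For fixed t ≥ 1 and γ > 0, the ratio p(K = t | T = t) = t_{(t)}/( (γt)^{(n)} V_n(t) ) · p_K(t) converges to 1 as n → ∞, provided p_K(t) > 0; equivalently, lim_{n→∞} V_n(t) (γt)^{(n)}/t! = p_K(t). -/

import Mathlib

open Filter

/-- Ascending factorial `x^{(n)} = x (x+1) ⋯ (x+n−1)` for a real `x`. -/
def ascFac (x : ℝ) (m : ℕ) : ℝ := ∏ i ∈ Finset.range m, (x + i)

/-- Descending factorial `k_{(t)} = k (k−1) ⋯ (k−t+1)` for a natural `k`, as a real. -/
def descFac (k : ℕ) (t : ℕ) : ℝ := ∏ i ∈ Finset.range t, ((k : ℝ) - i)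

/-- The MFM coefficient `V_n(t) = Σ_{k≥1} k_{(t)} / (γ k)^{(n)} · p_K(k)`. -/
noncomputable def Vcoef (γ : ℝ) (pK : ℕ → ℝ) (n t : ℕ) : ℝ :=
  ∑' k : ℕ, descFac k t / ascFac (γ * k) n * pK k

/-!
Multiplied by `(γt)^{(n)}`, `V_n(t)` becomes the series of `p_K(k) k_{(t)} (γt)^{(n)} / (γk)^{(n)}`.
Its terms with `k < t` vanish, the term `k = t` is `t! p_K(t)`, and for `k > t` the ratio
`(γt)^{(n)} / (γk)^{(n)} ≤ exp (-(γk - γt) Σ_{i<n} 1/(γk + i))` tends to `0` because the harmonic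
series diverges. The ratio is antitone in `n` and `k_{(t)} γ^t ≤ (γk)^{(t)}`, so for `n ≥ t` every
term is bounded by `|p_K(k)| (γt)^{(t)} / γ^t`, and dominated convergence for series applies.
-/

open Finset Real
open scoped Nat Topology

theorem descFac_eq_descFactorial (k t : ℕ) : descFac k t = k.descFactorial t := by
  rw [descFac, ← descPochhammer_eval_eq_prod_range, descPochhammer_eval_eq_descFactorial]

theorem descFac_nonneg (k t : ℕ) : 0 ≤ descFac k t := by
  rw [descFac_eq_descFactorial]; positivity

theorem descFac_self (t : ℕ) : descFac t t = t ! := by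
  rw [descFac_eq_descFactorial, Nat.descFactorial_self]

theorem descFac_of_lt {k t : ℕ} (h : k < t) : descFac k t = 0 := by
  rw [descFac_eq_descFactorial, Nat.descFactorial_eq_zero_iff_lt.mpr h, Nat.cast_zero]

theorem descFac_le_pow (k t : ℕ) : descFac k t ≤ (k : ℝ) ^ t := by
  rw [descFac_eq_descFactorial]; exact_mod_cast Nat.descFactorial_le_pow k t

theorem ascFac_succ (x : ℝ) (n : ℕ) : ascFac x (n + 1) = ascFac x n * (x + n) :=
  prod_range_succ _ _

theorem ascFac_pos {x : ℝ} (hx : 0 < x) (n : ℕ) : 0 < ascFac x n :=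
  prod_pos fun _ _ => by positivity

theorem ascFac_nonneg {x : ℝ} (hx : 0 ≤ x) (n : ℕ) : 0 ≤ ascFac x n :=
  prod_nonneg fun _ _ => by positivity

theorem pow_le_ascFac {x : ℝ} (hx : 0 ≤ x) (n : ℕ) : x ^ n ≤ ascFac x n := by
  simpa [ascFac] using prod_le_prod (s := range n) (fun _ _ => hx)
    fun i _ => le_add_of_nonneg_right (Nat.cast_nonneg (α := ℝ) i)

theorem descFac_mul_pow_le_ascFac {a : ℝ} (ha : 0 ≤ a) (k t : ℕ) :
    descFac k t * a ^ t ≤ ascFac (a * k) t :=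
  calc descFac k t * a ^ t ≤ (k : ℝ) ^ t * a ^ t := by gcongr; exact descFac_le_pow k t
    _ = (a * k) ^ t := by ring
    _ ≤ ascFac (a * k) t := pow_le_ascFac (by positivity) t

theorem ascFac_div_ascFac_antitone {x y : ℝ} (hx : 0 ≤ x) (hxy : x ≤ y) :
    Antitone fun n => ascFac x n / ascFac y n := by
  have hy := hx.trans hxy
  refine antitone_nat_of_succ_le fun n => ?_
  rw [ascFac_succ, ascFac_succ, mul_div_mul_comm]
  exact mul_le_of_le_one_right (div_nonneg (ascFac_nonneg hx n) (ascFac_nonneg hy n))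
    (div_le_one_of_le₀ (by linarith) (by positivity))

theorem ascFac_div_ascFac_le_exp {x y : ℝ} (hx : 0 ≤ x) (hxy : x ≤ y) (n : ℕ) :
    ascFac x n / ascFac y n ≤ exp (-((y - x) * ∑ i ∈ range n, 1 / (y + i))) := by
  rw [ascFac, ascFac, ← prod_div_distrib, mul_sum, ← sum_neg_distrib, exp_sum]
  have hy := hx.trans hxy
  refine prod_le_prod (fun i _ => by positivity) fun i _ => ?_
  rcases (show 0 ≤ y + i by positivity).eq_or_lt with hyi | hyi
  · rw [← hyi, div_zero]; positivity
  · calc (x + i) / (y + i) = -((y - x) * (1 / (y + i))) + 1 := by field_simp; ring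
      _ ≤ exp (-((y - x) * (1 / (y + i)))) := add_one_le_exp _

theorem tendsto_sum_range_one_div_add_atTop {y : ℝ} (hy : 0 ≤ y) :
    Tendsto (fun n => ∑ i ∈ range n, 1 / (y + i)) atTop atTop := by
  have h := mt (summable_one_div_nat_add_rpow y 1).mp (lt_irrefl 1)
  simp_rw [rpow_one, abs_of_nonneg (add_nonneg (Nat.cast_nonneg _) hy), add_comm _ y] at h
  exact (not_summable_iff_tendsto_nat_atTop_of_nonneg fun i => by positivity).mp h

theorem tendsto_ascFac_div_ascFac_zero {x y : ℝ} (hx : 0 ≤ x) (hxy : x < y) :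
    Tendsto (fun n => ascFac x n / ascFac y n) atTop (𝓝 0) := by
  have hsum := (tendsto_sum_range_one_div_add_atTop (hx.trans hxy.le)).const_mul_atTop
    (sub_pos.mpr hxy)
  exact squeeze_zero
    (fun n => div_nonneg (ascFac_nonneg hx n) (ascFac_nonneg (hx.trans hxy.le) n))
    (ascFac_div_ascFac_le_exp hx hxy.le) (tendsto_exp_neg_atTop_nhds_zero.comp hsum)

section MixtureTerm

variable {a : ℝ} (ha : 0 < a) {t : ℕ} (ht : 0 < t)
include ha ht

theorem tendsto_descFac_mul_ascFac_div (k : ℕ) :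
    Tendsto (fun n => descFac k t * (ascFac (a * t) n / ascFac (a * k) n)) atTop
      (𝓝 (if k = t then (t ! : ℝ) else 0)) := by
  rcases lt_trichotomy k t with hkt | rfl | hkt
  · simp [descFac_of_lt hkt, hkt.ne]
  · have hpos n : ascFac (a * k) n ≠ 0 := (ascFac_pos (by positivity) n).ne'
    simp [hpos, descFac_self]
  · have hlt : a * t < a * k := by gcongr
    simpa [hkt.ne'] using
      (tendsto_ascFac_div_ascFac_zero (by positivity) hlt).const_mul (descFac k t)

theorem descFac_mul_ascFac_div_le {n : ℕ} (hn : t ≤ n) (k : ℕ) :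
    descFac k t * (ascFac (a * t) n / ascFac (a * k) n) ≤ ascFac (a * t) t / a ^ t := by
  rcases lt_or_ge k t with hkt | htk
  · rw [descFac_of_lt hkt, zero_mul]
    exact div_nonneg (ascFac_nonneg (by positivity) t) (by positivity)
  have hk : (0 : ℝ) < k := by exact_mod_cast ht.trans_le htk
  have hak : 0 < ascFac (a * k) t := ascFac_pos (by positivity) t
  calc descFac k t * (ascFac (a * t) n / ascFac (a * k) n)
      ≤ descFac k t * (ascFac (a * t) t / ascFac (a * k) t) :=
        mul_le_mul_of_nonneg_left
          (ascFac_div_ascFac_antitone (by positivity) (by gcongr) hn) (descFac_nonneg k t)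
    _ = ascFac (a * t) t * (descFac k t / ascFac (a * k) t) := by ring
    _ ≤ ascFac (a * t) t * (1 / a ^ t) := by
        refine mul_le_mul_of_nonneg_left ?_ (ascFac_nonneg (by positivity) t)
        rw [div_le_div_iff₀ hak (by positivity), one_mul]
        exact descFac_mul_pow_le_ascFac ha.le k t
    _ = ascFac (a * t) t / a ^ t := mul_one_div _ _

end MixtureTerm

theorem tendsto_Vcoef_mul_ascFac {γ : ℝ} (hγ : 0 < γ) {t : ℕ} (ht : 0 < t) {pK : ℕ → ℝ}
    (hpK : Summable pK) :
    Tendsto (fun n => Vcoef γ pK n t * ascFac (γ * t) n) atTop (𝓝 (t ! * pK t)) := by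
  have hseries n : Vcoef γ pK n t * ascFac (γ * t) n =
      ∑' k, pK k * (descFac k t * (ascFac (γ * t) n / ascFac (γ * k) n)) := by
    rw [Vcoef, ← tsum_mul_right]
    exact tsum_congr fun k => by ring
  have hlimit : ∑' k, pK k * (if k = t then (t ! : ℝ) else 0) = t ! * pK t := by
    simp [mul_ite, mul_comm]
  simp_rw [hseries, ← hlimit]
  refine tendsto_tsum_of_dominated_convergence (hpK.abs.mul_right (ascFac (γ * t) t / γ ^ t))
    (fun k => (tendsto_descFac_mul_ascFac_div hγ ht k).const_mul (pK k)) ?_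
  filter_upwards [eventually_ge_atTop t] with n hn k
  have hterm : 0 ≤ descFac k t * (ascFac (γ * t) n / ascFac (γ * k) n) :=
    mul_nonneg (descFac_nonneg k t) (div_nonneg (ascFac_nonneg (by positivity) n)
      (ascFac_nonneg (by positivity) n))
  rw [norm_mul, Real.norm_eq_abs, Real.norm_eq_abs, abs_of_nonneg hterm]
  exact mul_le_mul_of_nonneg_left (descFac_mul_ascFac_div_le hγ ht hn k) (abs_nonneg _)

theorem MFM_K_given_T_tendsto_one_general (γ : ℝ) (hγ : 0 < γ) (t : ℕ) (ht : 1 ≤ t)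
    (pK : ℕ → ℝ)
    (hpK_sum : HasSum pK 1) (hpKt : 0 < pK t) :
    Tendsto (fun n => descFac t t * pK t / (ascFac (γ * t) n * Vcoef γ pK n t))
        atTop (nhds 1) ∧
    Tendsto (fun n => Vcoef γ pK n t * ascFac (γ * t) n / (Nat.factorial t : ℝ))
        atTop (nhds (pK t)) := by
  have hlim := tendsto_Vcoef_mul_ascFac hγ ht hpK_sum.summable
  have hfac : (t ! : ℝ) ≠ 0 := by positivity
  have hne : (t ! : ℝ) * pK t ≠ 0 := mul_ne_zero hfac hpKt.ne'
  constructor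
  · have h := (tendsto_const_nhds (x := (t ! : ℝ) * pK t)).div hlim hne
    rw [div_self hne] at h
    rw [descFac_self]
    exact h.congr fun n => by rw [Pi.div_apply, mul_comm (Vcoef γ pK n t)]
  · simpa only [mul_div_cancel_left₀ _ hfac] using hlim.div_const (t ! : ℝ)

/-- For fixed `t ≥ 1` and `γ > 0`, with `p_K(t) > 0`, we have
`p(K = t | T = t) = t_{(t)} p_K(t) / ((γ t)^{(n)} V_n(t)) → 1` as `n → ∞`;
equivalently `V_n(t) (γ t)^{(n)} / t! → p_K(t)`. -/
theorem MFM_K_given_T_tendsto_one (γ : ℝ) (hγ : 0 < γ) (t : ℕ) (ht : 1 ≤ t)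
    (pK : ℕ → ℝ) (hpK_nonneg : ∀ k, 0 ≤ pK k) (hpK_zero : pK 0 = 0)
    (hpK_sum : HasSum pK 1) (hpKt : 0 < pK t) :
    Tendsto (fun n => descFac t t * pK t / (ascFac (γ * t) n * Vcoef γ pK n t))
        atTop (nhds 1) ∧
    Tendsto (fun n => Vcoef γ pK n t * ascFac (γ * t) n / (Nat.factorial t : ℝ))
        atTop (nhds (pK t)) :=
  MFM_K_given_T_tendsto_one_general γ hγ t ht pK hpK_sum hpKt
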